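/- The deduction theorem holds for LP^{→,F}: for every set Γ of formulas and all formulas A and B, Γ ∪ {A} ⊨ B if and only if Γ ⊨ A → B. -/
import Mathlib


/-- The three truth values: true, false, both-true-and-false. -/
inductive TV : Type
  | t : TV
  | f : TV
  | b : TV
  deriving DecidableEq

/-- Formulas of LP^{→,F}: propositional variables, falsity constant,
    negation, conjunction, disjunction, implication. -/
inductive Fm : Type
  | var : ℕ → Fm
  | fls : Fm
  | neg : Fm → Fm
  | conj : Fm → Fm → Fm
  | disj : Fm → Fm → Fm
  | impl : Fm → Fm → Fm
  deriving DecidableEq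

/-- The LP^{→,F} negation truth function. -/
def TV.negLP : TV → TV
  | .t => .f
  | .f => .t
  | .b => .b

/-- The LP^{→,F} conjunction truth function. -/
def TV.andLP : TV → TV → TV
  | .f, _ => .f
  | _, .f => .f
  | .t, .t => .t
  | _, _ => .b

/-- The LP^{→,F} disjunction truth function. -/
def TV.orLP : TV → TV → TV
  | .t, _ => .t
  | _, .t => .t
  | .f, .f => .f
  | _, _ => .b

/-- The LP^{→,F} implication truth function: t if the antecedent is f,
    otherwise the value of the consequent. -/
def TV.implLP : TV → TV → TV
  | .f, _ => .t
  | _, y => y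

/-- A valuation for LP^{→,F}. -/
def IsValuation (ν : Fm → TV) : Prop :=
  ν .fls = .f ∧
  (∀ A, ν (.neg A) = (ν A).negLP) ∧
  (∀ A B, ν (.conj A B) = (ν A).andLP (ν B)) ∧
  (∀ A B, ν (.disj A B) = (ν A).orLP (ν B)) ∧
  (∀ A B, ν (.impl A B) = (ν A).implLP (ν B))

/-- Logical equivalence in LP^{→,F}. -/
def LEquiv (A B : Fm) : Prop := ∀ ν : Fm → TV, IsValuation ν → ν A = ν B

/-- The truth constant T, an abbreviation for ¬F. -/
def Fm.tru : Fm := .neg .fls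

/-- A truth value is designated iff it is t or ⊤. -/
def Designated (v : TV) : Prop := v = .t ∨ v = .b

/-- Semantic logical consequence in LP^{→,F}. -/
def LPCons (Γ : Set Fm) (A : Fm) : Prop :=
  ∀ ν : Fm → TV, IsValuation ν → ((∃ B ∈ Γ, ν B = .f) ∨ Designated (ν A))

/-- Validity in LP^{→,F}. -/
def LPValid (A : Fm) : Prop := ∀ ν : Fm → TV, IsValuation ν → Designated (ν A)

/-- The deduction theorem holds for LP^{→,F}. -/
theorem lp_deduction_theorem :
    ∀ (Γ : Set Fm) (A B : Fm), LPCons (insert A Γ) B ↔ LPCons Γ (A.impl B) := by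
  intro Γ A B
  constructor
  · intro h ν hν
    obtain ⟨_, _, _, _, himp⟩ := hν
    rcases h ν ⟨‹_›, ‹_›, ‹_›, ‹_›, himp⟩ with ⟨C, hC, hCf⟩ | hB
    · rcases Set.mem_insert_iff.mp hC with rfl | hCΓ
      · right; rw [himp, hCf]; left; rfl
      · left; exact ⟨C, hCΓ, hCf⟩
    · rw [himp]
      rcases hA : ν A with _ | _ | _
      · right; rw [hA] at *; cases hB with
        | inl h' => rw [h']; left; rfl
        | inr h' => rw [h']; right; rfl
      · right; left; rfl
      · right; cases hB with
        | inl h' => rw [h']; left; rfl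
        | inr h' => rw [h']; right; rfl
  · intro h ν hν
    obtain ⟨_, _, _, _, himp⟩ := hν
    rcases h ν ⟨‹_›, ‹_›, ‹_›, ‹_›, himp⟩ with ⟨C, hC, hCf⟩ | hAB
    · left; exact ⟨C, Set.mem_insert_of_mem _ hC, hCf⟩
    · rw [himp] at hAB
      rcases hA : ν A with _ | _ | _
      · right; rw [hA] at hAB; exact hAB
      · left; exact ⟨A, Set.mem_insert _ _, hA⟩
      · right; rw [hA] at hAB; exact hAB
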